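/- arXiv:1110.6530 — 2 statements merged into one kernel-verified Lean document; each statement's English description precedes it below -/
import Mathlib

section
/- Let P be a regular probability kernel on the finite alphabet A and let X be a stationary chain compatible with P that satisfies concentration of measure at exponential rate. Then X is the unique stationary chain compatible with P. -/
open MeasureTheory ProbabilityTheory Filter ENNReal

namespace GT

/-- The set of pasts: `x i` represents the symbol `x_{-(i+1)}`. -/
abbrev Past (A : Type*) := ℕ → A

variable {A : Type*} [Fintype A] [MeasurableSpace A]

/-- The past of a bi-infinite trajectory: `past ω i = ω (-(i+1))`. -/
def past (ω : ℤ → A) : Past A := fun i => ω (-((i : ℤ) + 1))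

/-- The left shift on bi-infinite sequences. -/
def shift (ω : ℤ → A) : ℤ → A := fun n => ω (n + 1)

/-- Shift invariance (stationarity) of a measure on `A^ℤ`. -/
def ShiftInvariant (μ : Measure (ℤ → A)) : Prop := μ.map shift = μ

/-- `P` is a (measurable) probability kernel on the alphabet `A`. -/
def IsProbKernel (P : A → Past A → ℝ) : Prop :=
  (∀ a, Measurable (P a)) ∧ (∀ a x, 0 ≤ P a x) ∧ ∀ x, ∑ a, P a x = 1

/-- `μ` is compatible with the kernel `P`: `P` is a regular version of the
conditional probabilities of `μ` given the past. -/
def Compatible (P : A → Past A → ℝ) (μ : Measure (ℤ → A)) : Prop :=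
  ∀ (a : A) (B : Set (Past A)), MeasurableSet B →
    (μ {ω | ω 0 = a ∧ past ω ∈ B}).toReal = ∫ ω in past ⁻¹' B, P a (past ω) ∂μ

/-- A stationary chain compatible with `P`. -/
def StatChain (P : A → Past A → ℝ) (μ : Measure (ℤ → A)) : Prop :=
  IsProbabilityMeasure μ ∧ ShiftInvariant μ ∧ Compatible P μ

/-- The continuity rate (variation) of order `k` of the kernel `P`. -/
noncomputable def varRate (P : A → Past A → ℝ) (k : ℕ) : ℝ :=
  sSup {d | ∃ (b : A) (x y : Past A), (∀ i < k, x i = y i) ∧ d = |P b x - P b y|}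

/-- A kernel is continuous if its continuity rate tends to `0`. -/
def ContinuousKernel (P : A → Past A → ℝ) : Prop :=
  Tendsto (varRate P) atTop (nhds 0)

/-- Strong non-nullness of a kernel. -/
def StronglyNonNull (P : A → Past A → ℝ) : Prop := ∃ δ > 0, ∀ a x, δ ≤ P a x

/-- A regular kernel: continuous and strongly non-null. -/
def RegularKernel (P : A → Past A → ℝ) : Prop := ContinuousKernel P ∧ StronglyNonNull P

/-- Attractiveness: for every `a`, `x ↦ ∑_{b ≥ a} P(b|x)` is nondecreasing for the
coordinatewise partial order on pasts. -/
def Attractive [LinearOrder A] (P : A → Past A → ℝ) : Prop :=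
  ∀ a : A, Monotone fun x : Past A => ∑ b ∈ Finset.univ.filter (fun b => a ≤ b), P b x

/-- The word `(X_1, …, X_n)` read off from a trajectory `ω`. -/
def word (n : ℕ) (ω : ℤ → A) : Fin n → A := fun j => ω (((j : ℕ) : ℤ) + 1)

/-- `δ_j f`: the oscillation of `f` along the `j`-th coordinate. -/
noncomputable def deltaj {n : ℕ} (f : (Fin n → A) → ℝ) (j : Fin n) : ℝ :=
  sSup {d | ∃ a b : Fin n → A, (∀ i, i ≠ j → a i = b i) ∧ d = |f a - f b|}

/-- `‖δf‖_{ℓ1}`. -/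
noncomputable def delta1 {n : ℕ} (f : (Fin n → A) → ℝ) : ℝ := ∑ j, deltaj f j

/-- `‖δf‖_{ℓ2}²`. -/
noncomputable def delta2sq {n : ℕ} (f : (Fin n → A) → ℝ) : ℝ := ∑ j, (deltaj f j) ^ 2

/-- Concentration of measure at exponential rate for the stationary law `μ`. -/
def ConcExpRate (μ : Measure (ℤ → A)) : Prop :=
  ∃ (C : ℝ) (g : ℝ → ℝ → ℝ), (∀ ε t, 0 < ε → 0 < t → 0 < g ε t) ∧
    ∀ (n : ℕ), 1 ≤ n → ∀ (f : (Fin n → A) → ℝ) (ε : ℝ), 0 < ε →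
      (μ {ω | ε < |f (word n ω) - ∫ ω', f (word n ω') ∂μ|}).toReal ≤
        C * Real.exp (-(g ε (delta1 f)) / delta2sq f)

/-- `ℙ` is the law of an i.i.d. process indexed by `ℤ`. -/
def IsIID {U : Type*} [MeasurableSpace U] (P : Measure (ℤ → U)) : Prop :=
  IsProbabilityMeasure P ∧
  iIndepFun (fun (i : ℤ) (u : ℤ → U) => u i) P ∧
  ∀ i : ℤ, P.map (fun u => u i) = P.map (fun u => u 0)

/-- A finitary coding of the process with law `ℙ` onto the process with law `μ`:
a shift-equivariant measurable factor map together with a.s. finite stopping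
times `θ₁` (into the past) and `θ₂` (into the future) such that the zeroth output
symbol only depends on the coordinates in the window `[-θ₁, θ₂]`. -/
structure FinitaryCoding {U : Type*} [MeasurableSpace U]
    (μ : Measure (ℤ → A)) (P : Measure (ℤ → U)) where
  Φ : (ℤ → U) → ℤ → A
  meas : Measurable Φ
  equivariant : ∀ (u : ℤ → U) (n : ℤ), Φ (fun m => u (m + 1)) n = Φ u (n + 1)
  map_eq : P.map Φ = μ
  θ₁ : (ℤ → U) → ℕ∞
  θ₂ : (ℤ → U) → ℕ∞
  meas_theta : ∀ k l : ℕ∞, MeasurableSet {u | θ₁ u = k ∧ θ₂ u = l}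
  finite_ae : P {u | θ₁ u = ⊤ ∨ θ₂ u = ⊤} = 0
  window : ∀ (k l : ℕ) (u v : ℤ → U),
      (∀ j : ℤ, -(k : ℤ) ≤ j → j ≤ (l : ℤ) → u j = v j) →
      θ₁ u = (k : ℕ∞) → θ₂ u = (l : ℕ∞) → θ₁ v = (k : ℕ∞) ∧ θ₂ v = (l : ℕ∞)
  localize : ∀ u v : ℤ → U,
      (∀ j : ℤ, ((j.natAbs : ℕ∞) ≤ if j < 0 then θ₁ u else θ₂ u) → u j = v j) →
      Φ u 0 = Φ v 0

/-- The new past obtained by appending the freshly generated symbol `a`. -/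
def consPast (a : A) (x : Past A) : Past A := fun i =>
  match i with
  | 0 => a
  | j + 1 => x j

/-- The probability that the fixed-past chain with past `x` produces the word `w`
(first element of `w` generated first). -/
noncomputable def wordProb (P : A → Past A → ℝ) : Past A → List A → ℝ
  | _, [] => 1
  | x, a :: w => P a x * wordProb P (consPast a x) w

/-- `ℙ(X_{j+1}^x … X_{j+|w|}^x = w)`: the law of the fixed-past chain shifted by `j`. -/
noncomputable def shiftedCylProb (P : A → Past A → ℝ) (x : Past A) (j : ℕ) (w : List A) : ℝ :=
  ∑ u : Fin j → A, wordProb P x (List.ofFn u ++ w)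

/-- The cylinder set `{ω : ω_1 … ω_n = w}` (coordinates `1, …, |w|`). -/
def cylFrom1 (w : List A) : Set (ℤ → A) :=
  {ω | ∀ i : Fin w.length, ω (((i : ℕ) : ℤ) + 1) = w.get i}

/-!
By compatibility and stationarity, the probability under a stationary chain compatible with `P`
of an event depending on `n` consecutive symbols is the average over the past of
`(transitionOp P)^[n]` applied to its indicator. By continuity and strong non-nullness the values
of this function at two pasts differ at most by the factor `∏ j < n, (1 + var_j / δ) = exp (o n)`,
so `ν E ≤ exp (o n) * μ E` for any two such chains `μ` and `ν`.

Fix a word `w` of length `k` and let `f` be the frequency of `w` among `m` consecutive blocks of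
length `k`. Its means under `μ` and `ν` are `μ(w)` and `ν(w)`, and `δ_j f = 1 / m`, so
concentration bounds `μ (|f - μ(w)| > ε)` by `C * exp (-c m)`. Transferring this event to `ν` costs
only a factor `exp (o m)`, while its `ν`-probability is at least `|ν(w) - μ(w)| - ε`; hence
`ν(w) = μ(w)`, and by stationarity the laws of the words determine the measure.
-/

open Finset

section Shift

variable {α : Type*}

theorem shift_iterate_apply (n : ℕ) (ω : ℤ → α) (t : ℤ) : shift^[n] ω t = ω (t + n) := by
  induction n generalizing ω with
  | zero => simp
  | succ n ih => rw [Function.iterate_succ_apply, ih, shift, Nat.cast_succ, add_assoc]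

theorem past_shift (ω : ℤ → α) : past (shift ω) = consPast (ω 0) (past ω) := by
  funext i
  cases i <;> simp [past, shift, consPast]

variable [MeasurableSpace α]

theorem measurable_shift : Measurable (shift : (ℤ → α) → ℤ → α) :=
  measurable_pi_lambda _ fun _ => measurable_pi_apply _

theorem measurable_past : Measurable (past : (ℤ → α) → Past α) :=
  measurable_pi_lambda _ fun _ => measurable_pi_apply _

theorem measurable_word (n : ℕ) : Measurable (word n : (ℤ → α) → Fin n → α) :=
  measurable_pi_lambda _ fun _ => measurable_pi_apply _

theorem measurable_consPast (a : α) : Measurable (consPast a) := by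
  refine measurable_pi_lambda _ fun i => ?_
  cases i with
  | zero => exact measurable_const
  | succ j => exact measurable_pi_apply j

theorem ShiftInvariant.measurePreserving {μ : Measure (ℤ → α)} (h : ShiftInvariant μ) :
    MeasurePreserving shift μ μ :=
  ⟨measurable_shift, h⟩

end Shift

section Atoms

variable {α : Type*} [MeasurableSpace α]

theorem update_mem_iff_of_mem_measurableAtom {ι : Type*} [DecidableEq ι] {t : Set (ι → α)}
    (ht : MeasurableSet t) {ω : ι → α} {j : ι} {c : α} (hc : c ∈ measurableAtom (ω j)) :
    Function.update ω j c ∈ t ↔ ω ∈ t := by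
  rw [MeasurableSpace.pi_eq_generateFrom_projections] at ht
  induction t, ht using MeasurableSpace.generateFrom_induction generalizing ω c with
  | hC t ht =>
    obtain ⟨i, s, hs, rfl⟩ := ht
    rcases eq_or_ne i j with rfl | hij
    · simp only [Set.mem_preimage, Function.eval, Function.update_self]
      refine ⟨fun hcs => ?_, fun hωs => mem_of_mem_measurableAtom hc hs hωs⟩
      by_contra hωs
      exact mem_of_mem_measurableAtom hc hs.compl hωs hcs
    · simp [Function.update_of_ne hij]
  | empty => simp
  | compl t _ ih => simp [ih hc]
  | iUnion t _ ih => simp [ih _ hc]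

theorem measure_coord_eq_measurableAtom {ι : Type*} [DecidableEq ι] (μ : Measure (ι → α))
    (j : ι) (c : α) : μ {ω | ω j = c} = μ {ω | ω j ∈ measurableAtom c} := by
  refine le_antisymm (measure_mono fun ω (hω : ω j = c) => ?_) ?_
  · show ω j ∈ measurableAtom c
    rw [hω]
    exact mem_measurableAtom_self c
  · rw [← measure_toMeasurable (μ := μ) {ω : ι → α | ω j = c}]
    refine measure_mono fun ω hω => ?_
    have hc : c ∈ measurableAtom (ω j) := by
      rw [measurableAtom_eq_of_mem hω]; exact mem_measurableAtom_self c
    refine (update_mem_iff_of_mem_measurableAtom (measurableSet_toMeasurable _ _) hc).1 ?_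
    exact subset_toMeasurable _ _ (by simp)

end Atoms

section Kernel

variable {P : A → Past A → ℝ}

theorem IsProbKernel.le_one (hP : IsProbKernel P) (a : A) (x : Past A) : P a x ≤ 1 :=
  hP.2.2 x ▸ single_le_sum (fun b _ => hP.2.1 b x) (mem_univ a)

theorem IsProbKernel.integrable_comp (hP : IsProbKernel P) (a : A)
    {Ω : Type*} [MeasurableSpace Ω] {μ : Measure Ω} [IsFiniteMeasure μ] {f : Ω → Past A}
    (hf : Measurable f) : Integrable (fun ω => P a (f ω)) μ :=
  Integrable.of_bound ((hP.1 a).comp hf).aestronglyMeasurable 1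
    (ae_of_all _ fun ω => by
      rw [Real.norm_eq_abs, abs_of_nonneg (hP.2.1 a _)]
      exact hP.le_one a _)

theorem measurableSingletonClass_of_compatible (hP : IsProbKernel P) {δ : ℝ} (hδ : 0 < δ)
    (hPδ : ∀ a x, δ ≤ P a x) {μ : Measure (ℤ → A)} [IsProbabilityMeasure μ] (hc : Compatible P μ) : MeasurableSingletonClass A := by
  classical
  -- `Compatible` evaluates `μ` on the sets `{ω | ω 0 = c}`, which need not be measurable; their
  -- outer measures are those of the atoms of `c`, are at least `δ` and sum to `1`, so no atom can
  -- contain two symbols.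
  set r : A → ℝ := fun c => (μ {ω | ω 0 ∈ measurableAtom c}).toReal
  have hr : ∀ c, r c = ∫ ω, P c (past ω) ∂μ := fun c => by
    simpa [r, ← measure_coord_eq_measurableAtom] using hc c Set.univ MeasurableSet.univ
  have hsum : ∑ c, r c = 1 := by
    simp_rw [hr, ← integral_finsetSum _ fun c _ => hP.integrable_comp c measurable_past, hP.2.2]
    simp
  refine ⟨fun a => ?_⟩
  by_contra hna
  obtain ⟨b, hb, hba⟩ : ∃ b ∈ measurableAtom a, b ≠ a := by
    by_contra! h
    have := MeasurableSet.measurableAtom_of_countable a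
    rw [Set.eq_singleton_iff_unique_mem.2 ⟨mem_measurableAtom_self a, h⟩] at this
    exact hna this
  have hcover : 1 ≤ ∑ c ∈ univ.erase b, r c := by
    have hsub : Set.univ ⊆ ⋃ c ∈ univ.erase b, {ω : ℤ → A | ω 0 ∈ measurableAtom c} := by
      intro ω _
      by_cases h0 : ω 0 = b
      · exact Set.mem_biUnion (mem_erase.2 ⟨hba.symm, mem_univ a⟩) (by simp [h0, hb])
      · exact Set.mem_biUnion (mem_erase.2 ⟨h0, mem_univ _⟩) (mem_measurableAtom_self _)
    have := (measure_mono (μ := μ) hsub).trans (measure_biUnion_finset_le _ _)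
    rw [measure_univ] at this
    simpa [r, ENNReal.toReal_sum (fun c _ => measure_ne_top μ _)] using
      ENNReal.toReal_mono (ENNReal.sum_ne_top.2 fun c _ => measure_ne_top μ _) this
  have hrb : δ ≤ r b := by
    rw [hr]
    calc δ = ∫ _, δ ∂μ := by simp
      _ ≤ _ := integral_mono (integrable_const δ) (hP.integrable_comp b measurable_past)
          fun ω => hPδ b _
  linarith [sum_erase_add univ r (mem_univ b)]

theorem Compatible.map_restrict_past {μ : Measure (ℤ → A)} [IsFiniteMeasure μ]
    (hP : IsProbKernel P) (hc : Compatible P μ) (a : A) :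
    (μ.restrict {ω | ω 0 = a}).map past = (μ.map past).withDensity fun x => .ofReal (P a x) := by
  ext B hB
  rw [Measure.map_apply measurable_past hB, Measure.restrict_apply (measurable_past hB),
    withDensity_apply _ hB,
    setLIntegral_map hB (hP.1 a).ennreal_ofReal measurable_past,
    ← ofReal_integral_eq_lintegral_ofReal (hP.integrable_comp a measurable_past).integrableOn
      (ae_of_all _ fun ω => hP.2.1 a _),
    ← hc a B hB, ENNReal.ofReal_toReal (measure_ne_top μ _)]
  congr 1
  ext ω
  exact and_comm

theorem Compatible.setLIntegral_eq_lintegral_mul {μ : Measure (ℤ → A)} [IsFiniteMeasure μ]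
    (hP : IsProbKernel P) (hc : Compatible P μ) (a : A) {g : Past A → ℝ≥0∞}
    (hg : Measurable g) :
    ∫⁻ ω in {ω | ω 0 = a}, g (past ω) ∂μ = ∫⁻ ω, .ofReal (P a (past ω)) * g (past ω) ∂μ := by
  rw [← lintegral_map hg measurable_past, hc.map_restrict_past hP a,
    lintegral_withDensity_eq_lintegral_mul _ (hP.1 a).ennreal_ofReal hg,
    lintegral_map ((hP.1 a).ennreal_ofReal.mul hg) measurable_past]
  rfl

variable (P) in
noncomputable def transitionOp (F : Past A → ℝ≥0∞) (x : Past A) : ℝ≥0∞ :=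
  ∑ a, .ofReal (P a x) * F (consPast a x)

theorem measurable_transitionOp (hP : IsProbKernel P) {F : Past A → ℝ≥0∞} (hF : Measurable F) :
    Measurable (transitionOp P F) :=
  Finset.measurable_sum _ fun a _ =>
    (hP.1 a).ennreal_ofReal.mul (hF.comp (measurable_consPast a))

variable [MeasurableSingletonClass A]

theorem lintegral_transitionOp {μ : Measure (ℤ → A)} [IsFiniteMeasure μ] (hP : IsProbKernel P)
    (hs : ShiftInvariant μ) (hc : Compatible P μ) {F : Past A → ℝ≥0∞} (hF : Measurable F) :
    ∫⁻ ω, transitionOp P F (past ω) ∂μ = ∫⁻ ω, F (past ω) ∂μ := by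
  have hsplit : ∀ ω : ℤ → A, F (past (shift ω))
      = ∑ a, {ω : ℤ → A | ω 0 = a}.indicator (fun ω => F (consPast a (past ω))) ω := by
    intro ω
    rw [past_shift, Finset.sum_eq_single (ω 0)] <;> simp +contextual [Set.indicator, eq_comm]
  have hmeas : ∀ a : A, MeasurableSet {ω : ℤ → A | ω 0 = a} :=
    fun a => (measurableSet_singleton a).preimage (measurable_pi_apply 0)
  have hFa : ∀ a, Measurable fun ω : ℤ → A => F (consPast a (past ω)) :=
    fun a => (hF.comp (measurable_consPast a)).comp measurable_past
  -- `past ∘ shift` has the law of `past` and prepends `ω 0`, whose conditional law is `P`.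
  calc ∫⁻ ω, transitionOp P F (past ω) ∂μ
      = ∑ a, ∫⁻ ω, .ofReal (P a (past ω)) * F (consPast a (past ω)) ∂μ :=
        lintegral_finsetSum _ fun a _ => ((hP.1 a).ennreal_ofReal.comp measurable_past).mul (hFa a)
    _ = ∑ a, ∫⁻ ω in {ω | ω 0 = a}, F (consPast a (past ω)) ∂μ :=
        Finset.sum_congr rfl fun a _ =>
          (hc.setLIntegral_eq_lintegral_mul hP a (hF.comp (measurable_consPast a))).symm
    _ = ∫⁻ ω, F (past (shift ω)) ∂μ := by
        simp_rw [hsplit]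
        rw [lintegral_finsetSum _ fun a _ => (hFa a).indicator (hmeas a)]
        exact Finset.sum_congr rfl fun a _ => (lintegral_indicator (hmeas a) _).symm
    _ = ∫⁻ ω, F (past ω) ∂μ :=
        hs.measurePreserving.lintegral_comp (hF.comp measurable_past)

theorem lintegral_transitionOp_iterate {μ : Measure (ℤ → A)} [IsFiniteMeasure μ]
    (hP : IsProbKernel P) (hs : ShiftInvariant μ) (hc : Compatible P μ) {F : Past A → ℝ≥0∞}
    (hF : Measurable F) (n : ℕ) :
    ∫⁻ ω, (transitionOp P)^[n] F (past ω) ∂μ = ∫⁻ ω, F (past ω) ∂μ := by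
  induction n generalizing F with
  | zero => rfl
  | succ n ih =>
    rw [Function.iterate_succ_apply, ih (measurable_transitionOp hP hF),
      lintegral_transitionOp hP hs hc hF]

end Kernel

section Comparison

variable {P : A → Past A → ℝ}

theorem abs_sub_le_varRate (hP : IsProbKernel P) {k : ℕ} (b : A) {x y : Past A}
    (hxy : ∀ i < k, x i = y i) : |P b x - P b y| ≤ varRate P k := by
  refine le_csSup ⟨1, ?_⟩ ⟨b, x, y, hxy, rfl⟩
  rintro d ⟨b, x, y, -, rfl⟩
  rw [abs_sub_le_iff]
  constructor <;> linarith [hP.2.1 b x, hP.2.1 b y, hP.le_one b x, hP.le_one b y]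

theorem varRate_nonneg [Nonempty A] (hP : IsProbKernel P) (k : ℕ) : 0 ≤ varRate P k :=
  (abs_nonneg _).trans <| abs_sub_le_varRate hP (Classical.arbitrary A)
    (x := fun _ => Classical.arbitrary A) fun _ _ => rfl

variable [Nonempty A] {δ : ℝ}

theorem one_add_varRate_div_nonneg (hP : IsProbKernel P) (hδ : 0 ≤ δ) (k : ℕ) :
    0 ≤ 1 + varRate P k / δ := by
  linarith [div_nonneg (varRate_nonneg hP k) hδ]

theorem le_one_add_varRate_div_mul (hP : IsProbKernel P) (hδ : 0 < δ) (hPδ : ∀ a x, δ ≤ P a x)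
    {k : ℕ} (a : A) {x y : Past A} (hxy : ∀ i < k, x i = y i) :
    P a x ≤ (1 + varRate P k / δ) * P a y := by
  have hv := varRate_nonneg hP k
  have h1 := (abs_sub_le_iff.1 (abs_sub_le_varRate hP a hxy)).1
  have h2 : varRate P k ≤ varRate P k / δ * P a y := by
    rw [div_mul_eq_mul_div, le_div_iff₀ hδ]
    exact mul_le_mul_of_nonneg_left (hPδ a y) hv
  linarith

theorem transitionOp_iterate_le (hP : IsProbKernel P) (hδ : 0 < δ) (hPδ : ∀ a x, δ ≤ P a x)
    {N : ℕ} {F : Past A → ℝ≥0∞} (hF : ∀ z z' : Past A, (∀ i < N, z i = z' i) → F z = F z')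
    (n : ℕ) {j : ℕ} (hNj : N ≤ n + j) {x y : Past A} (hxy : ∀ i < j, x i = y i) :
    (transitionOp P)^[n] F x
      ≤ .ofReal (∏ i ∈ range n, (1 + varRate P (i + j) / δ)) * (transitionOp P)^[n] F y := by
  have hfac := one_add_varRate_div_nonneg hP hδ.le
  induction n generalizing j x y with
  | zero => simp [hF x y fun i hi => hxy i (by omega)]
  | succ n ih =>
    have hcons : ∀ a, ∀ i < j + 1, consPast a x i = consPast a y i := by
      rintro a (_ | i) hi
      · rfl
      · exact hxy i (by omega)
    rw [Function.iterate_succ_apply', transitionOp, transitionOp, Finset.mul_sum]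
    refine Finset.sum_le_sum fun a _ => ?_
    calc ENNReal.ofReal (P a x) * (transitionOp P)^[n] F (consPast a x)
        ≤ ENNReal.ofReal ((1 + varRate P j / δ) * P a y) *
          (ENNReal.ofReal (∏ i ∈ range n, (1 + varRate P (i + (j + 1)) / δ)) *
            (transitionOp P)^[n] F (consPast a y)) :=
          mul_le_mul' (ENNReal.ofReal_le_ofReal (le_one_add_varRate_div_mul hP hδ hPδ a hxy))
            (ih (by omega) (hcons a))
      _ = _ := by
        rw [prod_range_succ', ENNReal.ofReal_mul (hfac j),
          ENNReal.ofReal_mul (prod_nonneg fun i _ => hfac _)]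
        simp only [zero_add, add_assoc, add_comm 1 j]
        ring

end Comparison

theorem lintegral_le_mul_lintegral_of_le_mul {Ω : Type*} [MeasurableSpace Ω] {μ ν : Measure Ω}
    [IsProbabilityMeasure μ] [IsProbabilityMeasure ν] {f g : Ω → ℝ≥0∞} {c : ℝ≥0∞} (hc : c ≠ ⊤)
    (h : ∀ ω ω', f ω ≤ c * g ω') : ∫⁻ ω, f ω ∂ν ≤ c * ∫⁻ ω, g ω ∂μ :=
  calc ∫⁻ ω, f ω ∂ν = ∫⁻ _, ∫⁻ ω, f ω ∂ν ∂μ := by simp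
    _ ≤ ∫⁻ ω', c * g ω' ∂μ :=
        lintegral_mono fun ω' => (lintegral_mono fun ω => h ω ω').trans (by simp)
    _ = c * ∫⁻ ω, g ω ∂μ := lintegral_const_mul' c g hc

section Words

variable {α : Type*}

def lastWord (n : ℕ) (x : Past α) : Fin n → α := fun i => x (Fin.rev i)

theorem word_eq_lastWord_past (n : ℕ) (ω : ℤ → α) :
    word n ω = lastWord n (past (shift^[n + 1] ω)) := by
  funext i
  simp only [word, lastWord, past, shift_iterate_apply, Fin.val_rev]
  congr 1
  omega

variable [MeasurableSpace α]

theorem measurable_lastWord (n : ℕ) : Measurable (lastWord n : Past α → Fin n → α) :=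
  measurable_pi_lambda _ fun _ => measurable_pi_apply _

end Words

section WordEvents

variable [MeasurableSingletonClass A]

theorem ShiftInvariant.measure_word_preimage {ρ : Measure (ℤ → A)} (hs : ShiftInvariant ρ) (n : ℕ)
    (S : Set (Fin n → A)) : ρ (word n ⁻¹' S) = ρ (past ⁻¹' (lastWord n ⁻¹' S)) := by
  have hS : MeasurableSet (past ⁻¹' (lastWord n ⁻¹' S)) :=
    measurable_past (measurable_lastWord n S.to_countable.measurableSet)
  rw [← (hs.measurePreserving.iterate (n + 1)).measure_preimage hS.nullMeasurableSet]
  congr 1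
  ext ω
  simp [word_eq_lastWord_past]

variable [Nonempty A] {P : A → Past A → ℝ} {δ : ℝ}

theorem measure_word_preimage_le (hP : IsProbKernel P) (hδ : 0 < δ) (hPδ : ∀ a x, δ ≤ P a x)
    {μ ν : Measure (ℤ → A)} [IsProbabilityMeasure μ] [IsProbabilityMeasure ν]
    (hμs : ShiftInvariant μ) (hμc : Compatible P μ) (hνs : ShiftInvariant ν)
    (hνc : Compatible P ν) (n : ℕ) (S : Set (Fin n → A)) :
    ν (word n ⁻¹' S) ≤ .ofReal (∏ i ∈ range n, (1 + varRate P i / δ)) * μ (word n ⁻¹' S) := by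
  have hS : MeasurableSet S := S.to_countable.measurableSet
  set F : Past A → ℝ≥0∞ := fun z => S.indicator 1 (lastWord n z)
  have hF : Measurable F := (measurable_one.indicator hS).comp (measurable_lastWord n)
  have hloc : ∀ z z' : Past A, (∀ i < n, z i = z' i) → F z = F z' := fun z z' h =>
    congrArg (S.indicator 1) (funext fun i => h _ (Fin.rev i).isLt)
  have hexpr : ∀ ρ : Measure (ℤ → A), [IsProbabilityMeasure ρ] → ShiftInvariant ρ →
      Compatible P ρ → ρ (word n ⁻¹' S) = ∫⁻ ω, (transitionOp P)^[n] F (past ω) ∂ρ :=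
    fun ρ _ hs hc => by
      rw [lintegral_transitionOp_iterate hP hs hc hF, hs.measure_word_preimage,
        ← lintegral_indicator_one (measurable_past (measurable_lastWord n hS))]
      rfl
  rw [hexpr ν hνs hνc, hexpr μ hμs hμc]
  refine lintegral_le_mul_lintegral_of_le_mul ENNReal.ofReal_ne_top fun ω ω' => ?_
  simpa using transitionOp_iterate_le hP hδ hPδ hloc n (j := 0) le_self_add
    (x := past ω) (y := past ω') (by simp)

end WordEvents

theorem indicator_one_mem_Icc {β : Type*} (s : Set β) (x : β) :
    s.indicator (1 : β → ℝ) x ∈ Set.Icc 0 1 := by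
  by_cases hx : x ∈ s <;> simp [hx]

section Blocks

variable {α : Type*} {m k : ℕ}

-- Block `b` of `u` occupies the coordinates `k * b + i`, `i < k`.
def blockMatch (w : Fin k → α) (b : Fin m) : Set (Fin (m * k) → α) :=
  {u | ∀ i, u (finProdFinEquiv (b, i)) = w i}

noncomputable def blockFreq (w : Fin k → α) (u : Fin (m * k) → α) : ℝ :=
  (∑ b, (blockMatch w b).indicator 1 u) / m

theorem blockFreq_mem_Icc (w : Fin k → α) (u : Fin (m * k) → α) :
    blockFreq w u ∈ Set.Icc 0 1 := by
  have h01 := fun b => indicator_one_mem_Icc (blockMatch w b) u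
  refine ⟨div_nonneg (sum_nonneg fun b _ => (h01 b).1) m.cast_nonneg,
    div_le_one_of_le₀ ?_ m.cast_nonneg⟩
  simpa using sum_le_card_nsmul univ _ 1 fun b _ => (h01 b).2

theorem blockFreq_sub_blockFreq {w : Fin k → α} {j : Fin (m * k)} {u v : Fin (m * k) → α}
    (huv : ∀ i, i ≠ j → u i = v i) :
    blockFreq w u - blockFreq w v = ((blockMatch w (finProdFinEquiv.symm j).1).indicator 1 u
      - (blockMatch w (finProdFinEquiv.symm j).1).indicator (1 : (Fin (m * k) → α) → ℝ) v) / m := by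
  rw [blockFreq, blockFreq, ← sub_div, ← sum_sub_distrib,
    sum_eq_single (finProdFinEquiv.symm j).1 ?_ (by simp)]
  intro b _ hb
  have hmem : u ∈ blockMatch w b ↔ v ∈ blockMatch w b := by
    refine forall_congr' fun i => ?_
    rw [huv]
    rintro rfl
    simp at hb
  by_cases hu : u ∈ blockMatch w b
  · simp [hu, hmem.1 hu]
  · simp [hu, mt hmem.2 hu]

theorem deltaj_blockFreq [Nontrivial α] (w : Fin k → α) (j : Fin (m * k)) :
    deltaj (blockFreq (m := m) w) j = (m : ℝ)⁻¹ := by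
  obtain ⟨⟨b, i₀⟩, rfl⟩ := finProdFinEquiv.surjective j
  refine IsGreatest.csSup_eq ⟨?_, ?_⟩
  · set u : Fin (m * k) → α := fun j' => w (finProdFinEquiv.symm j').2
    obtain ⟨c, hc⟩ := exists_ne (w i₀)
    set v := Function.update u (finProdFinEquiv (b, i₀)) c
    have huv : ∀ i, i ≠ finProdFinEquiv (b, i₀) → u i = v i :=
      fun i hi => (Function.update_of_ne hi _ _).symm
    have hu : u ∈ blockMatch w b := fun i => by simp only [u, Equiv.symm_apply_apply]
    have hv : v ∉ blockMatch w b := fun h => hc <| by simpa [v] using h i₀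
    refine ⟨u, v, huv, ?_⟩
    rw [blockFreq_sub_blockFreq huv]
    simp [hu, hv]
  · rintro d ⟨u, v, huv, rfl⟩
    rw [blockFreq_sub_blockFreq huv, abs_div, Nat.abs_cast, inv_eq_one_div]
    exact div_le_div_of_nonneg_right (abs_sub_le_of_nonneg_of_le
      (indicator_one_mem_Icc _ _).1 (indicator_one_mem_Icc _ _).2
      (indicator_one_mem_Icc _ _).1 (indicator_one_mem_Icc _ _).2) m.cast_nonneg

theorem delta1_blockFreq [Nontrivial α] (hm : m ≠ 0) (w : Fin k → α) :
    delta1 (blockFreq (m := m) w) = k := by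
  simp only [delta1, deltaj_blockFreq, sum_const, card_univ, Fintype.card_fin, nsmul_eq_mul,
    Nat.cast_mul]
  field_simp

theorem delta2sq_blockFreq [Nontrivial α] (w : Fin k → α) :
    delta2sq (blockFreq (m := m) w) = k / m := by
  simp only [delta2sq, deltaj_blockFreq, inv_pow, sum_const, card_univ, Fintype.card_fin,
    nsmul_eq_mul, Nat.cast_mul]
  rcases eq_or_ne (m : ℝ) 0 with hm | hm
  · simp [hm]
  · field_simp

theorem word_preimage_blockMatch (w : Fin k → α) (b : Fin m) :
    word (m * k) ⁻¹' blockMatch w b = shift^[k * b] ⁻¹' (word k ⁻¹' {w}) := by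
  ext ω
  simp only [blockMatch, word, Set.mem_preimage, Set.mem_ofPred_eq, Set.mem_singleton_iff,
    funext_iff, shift_iterate_apply, finProdFinEquiv_apply_val]
  refine forall_congr' fun i => ?_
  push_cast
  ring_nf

theorem integral_blockFreq_word [Finite α] [MeasurableSpace α] [MeasurableSingletonClass α]
    {ρ : Measure (ℤ → α)} [IsProbabilityMeasure ρ] (hs : ShiftInvariant ρ) (hm : m ≠ 0)
    (w : Fin k → α) :
    ∫ ω, blockFreq w (word (m * k) ω) ∂ρ = ρ.real (word k ⁻¹' {w}) := by
  have hmeas : ∀ b : Fin m, MeasurableSet (word (m * k) ⁻¹' blockMatch w b) :=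
    fun b => measurable_word _ (Set.to_countable _).measurableSet
  have hterm : ∀ b : Fin m,
      ∫ ω, (blockMatch w b).indicator 1 (word (m * k) ω) ∂ρ = ρ.real (word k ⁻¹' {w}) := by
    intro b
    rw [← (hs.measurePreserving.iterate (k * b)).measureReal_preimage
      (measurable_word k (measurableSet_singleton w)).nullMeasurableSet,
      ← word_preimage_blockMatch, ← integral_indicator_one (hmeas b)]
    rfl
  simp only [blockFreq]
  rw [integral_div, integral_finsetSum _ fun b _ =>
    (integrable_const 1).indicator (hmeas b)]
  simp only [hterm, sum_const, card_univ, Fintype.card_fin, nsmul_eq_mul]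
  field_simp

end Blocks

theorem abs_integral_sub_le_add_measureReal {Ω : Type*} [MeasurableSpace Ω] {ν : Measure Ω}
    [IsProbabilityMeasure ν] {Y : Ω → ℝ} (hY : Measurable Y) {p ε : ℝ} (hε : 0 ≤ ε)
    (hYp : ∀ ω, |Y ω - p| ≤ 1) : |∫ ω, Y ω ∂ν - p| ≤ ε + ν.real {ω | ε < |Y ω - p|} := by
  have hD : MeasurableSet {ω | ε < |Y ω - p|} :=
    measurableSet_lt measurable_const ((hY.sub measurable_const).abs)
  have hYint : Integrable Y ν :=
    Integrable.of_bound hY.aestronglyMeasurable (|p| + 1) (ae_of_all _ fun ω => by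
      rw [Real.norm_eq_abs]
      linarith [abs_sub_abs_le_abs_sub (Y ω) p, hYp ω])
  have hint : Integrable (fun ω => Y ω - p) ν := hYint.sub (integrable_const p)
  have hind : Integrable ({ω | ε < |Y ω - p|}.indicator (1 : Ω → ℝ)) ν :=
    (integrable_const 1).indicator hD
  have hpt : ∀ ω, |Y ω - p| ≤ ε + {ω | ε < |Y ω - p|}.indicator 1 ω := fun ω => by
    by_cases hω : ε < |Y ω - p|
    · simpa [hω] using (hYp ω).trans (le_add_of_nonneg_left hε)
    · simpa [hω] using not_lt.1 hω
  calc |∫ ω, Y ω ∂ν - p| = |∫ ω, (Y ω - p) ∂ν| := by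
        rw [integral_sub hYint (integrable_const p), integral_const]
        simp
    _ ≤ ∫ ω, |Y ω - p| ∂ν := abs_integral_le_integral_abs
    _ ≤ ∫ ω, (ε + {ω | ε < |Y ω - p|}.indicator 1 ω) ∂ν :=
        integral_mono hint.abs ((integrable_const ε).add hind) hpt
    _ = ε + ν.real {ω | ε < |Y ω - p|} := by
        rw [integral_add (integrable_const ε) hind,
          integral_indicator_one hD]
        simp

theorem tendsto_prod_one_add_mul_exp_neg {a : ℕ → ℝ} (ha0 : ∀ j, 0 ≤ a j)
    (ha : Tendsto a atTop (nhds 0)) {k : ℕ} (hk : 0 < k) {γ : ℝ} (hγ : 0 < γ) :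
    Tendsto (fun m : ℕ => (∏ j ∈ range (m * k), (1 + a j)) * Real.exp (-(γ * m)))
      atTop (nhds 0) := by
  have hkR : (0 : ℝ) < k := Nat.cast_pos.2 hk
  have hprod : ∀ n, ∏ j ∈ range n, (1 + a j) ≤ Real.exp (∑ j ∈ range n, a j) := fun n => by
    rw [Real.exp_sum]
    exact prod_le_prod (fun j _ => by linarith [ha0 j]) fun j _ => by
      linarith [Real.add_one_le_exp (a j)]
  obtain ⟨N, hN⟩ := eventually_atTop.1 <|
    ha.cesaro.eventually (gt_mem_nhds (show (0 : ℝ) < γ / (2 * k) by positivity))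
  refine tendsto_of_tendsto_of_tendsto_of_le_of_le' tendsto_const_nhds
    (Real.tendsto_exp_neg_atTop_nhds_zero.comp
      (tendsto_natCast_atTop_atTop.const_mul_atTop (half_pos hγ)))
    (Eventually.of_forall fun m => mul_nonneg (prod_nonneg fun j _ => by linarith [ha0 j])
      (Real.exp_nonneg _)) (eventually_atTop.2 ⟨max N 1, fun m hm => ?_⟩)
  have hmk : N ≤ m * k ∧ 0 < m * k := by
    constructor <;> nlinarith [le_max_left N 1, le_max_right N 1]
  have hs : ∑ j ∈ range (m * k), a j ≤ γ / (2 * k) * (m * k : ℕ) := by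
    have := (inv_mul_lt_iff₀ (Nat.cast_pos.2 hmk.2)).1 (hN _ hmk.1)
    linarith
  calc (∏ j ∈ range (m * k), (1 + a j)) * Real.exp (-(γ * m))
      ≤ Real.exp (γ / (2 * k) * (m * k : ℕ)) * Real.exp (-(γ * m)) :=
        mul_le_mul_of_nonneg_right ((hprod _).trans (Real.exp_le_exp.2 hs)) (Real.exp_nonneg _)
    _ = Real.exp (-(γ / 2 * m)) := by
        rw [← Real.exp_add]
        congr 1
        push_cast
        field_simp
        ring

section Uniqueness

variable [MeasurableSingletonClass A] {P : A → Past A → ℝ} {δ : ℝ} {μ ν : Measure (ℤ → A)}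
  [IsProbabilityMeasure μ] [IsProbabilityMeasure ν]

theorem abs_measureReal_word_sub_le [Nontrivial A] (hP : IsProbKernel P) (hδ : 0 < δ)
    (hPδ : ∀ a x, δ ≤ P a x) (hμs : ShiftInvariant μ) (hμc : Compatible P μ)
    (hνs : ShiftInvariant ν) (hνc : Compatible P ν) (hconc : ConcExpRate μ) {k : ℕ} (hk : 0 < k)
    (w : Fin k → A) {ε : ℝ} (hε : 0 < ε) :
    ∃ C γ : ℝ, 0 < γ ∧ ∀ m : ℕ, 0 < m →
      |ν.real (word k ⁻¹' {w}) - μ.real (word k ⁻¹' {w})|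
        ≤ ε + (∏ j ∈ range (m * k), (1 + varRate P j / δ)) * (C * Real.exp (-(γ * m))) := by
  obtain ⟨C, g, hg, hconc⟩ := hconc
  have hkR : (0 : ℝ) < k := Nat.cast_pos.2 hk
  refine ⟨C, g ε k / k, div_pos (hg ε k hε hkR) hkR, fun m hm => ?_⟩
  set p := μ.real (word k ⁻¹' {w})
  set D := {u : Fin (m * k) → A | ε < |blockFreq w u - p|}
  have hconst : 0 ≤ ∏ j ∈ range (m * k), (1 + varRate P j / δ) :=
    prod_nonneg fun j _ => one_add_varRate_div_nonneg hP hδ.le j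
  have hν : |ν.real (word k ⁻¹' {w}) - p| ≤ ε + ν.real (word (m * k) ⁻¹' D) := by
    have := abs_integral_sub_le_add_measureReal (ν := ν)
      (Y := fun ω => blockFreq w (word (m * k) ω))
      ((measurable_of_finite (blockFreq w)).comp (measurable_word (m * k))) hε.le (p := p) fun ω =>
        abs_sub_le_of_nonneg_of_le (blockFreq_mem_Icc w _).1 (blockFreq_mem_Icc w _).2
          measureReal_nonneg measureReal_le_one
    rwa [integral_blockFreq_word hνs hm.ne' w] at this
  have hμ : μ.real (word (m * k) ⁻¹' D) ≤ C * Real.exp (-(g ε k / k * m)) := by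
    have := hconc (m * k) (Nat.one_le_iff_ne_zero.2 (Nat.mul_ne_zero hm.ne' hk.ne'))
      (blockFreq w) ε hε
    rw [integral_blockFreq_word hμs hm.ne' w, delta1_blockFreq hm.ne' w,
      delta2sq_blockFreq w] at this
    have hexp : -(g ε k / k * m) = -g ε k / (k / m) := by
      field_simp
    rw [hexp]
    exact this
  have hcmp : ν.real (word (m * k) ⁻¹' D)
      ≤ (∏ j ∈ range (m * k), (1 + varRate P j / δ)) * μ.real (word (m * k) ⁻¹' D) := by
    have := ENNReal.toReal_mono (ENNReal.mul_ne_top ENNReal.ofReal_ne_top (measure_ne_top μ _))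
      (measure_word_preimage_le hP hδ hPδ hμs hμc hνs hνc (m * k) D)
    rwa [ENNReal.toReal_mul, ENNReal.toReal_ofReal hconst] at this
  linarith [mul_le_mul_of_nonneg_left hμ hconst]

theorem measure_word_preimage_singleton_eq (hP : IsProbKernel P) (hδ : 0 < δ)
    (hPδ : ∀ a x, δ ≤ P a x) (hcont : ContinuousKernel P) (hμs : ShiftInvariant μ)
    (hμc : Compatible P μ) (hνs : ShiftInvariant ν) (hνc : Compatible P ν)
    (hconc : ConcExpRate μ) (k : ℕ) (w : Fin k → A) :
    ν (word k ⁻¹' {w}) = μ (word k ⁻¹' {w}) := by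
  rcases subsingleton_or_nontrivial (Fin k → A) with hsub | hnt
  · have : word k ⁻¹' {w} = Set.univ :=
      Set.eq_univ_of_forall fun ω => Subsingleton.elim (word k ω) w
    simp [this]
  obtain ⟨u, v, huv⟩ := exists_pair_ne (Fin k → A)
  obtain ⟨i, hi⟩ := Function.ne_iff.1 huv
  have : Nontrivial A := ⟨_, _, hi⟩
  refine (ENNReal.toReal_eq_toReal_iff' (measure_ne_top ν _) (measure_ne_top μ _)).1 ?_
  rw [← sub_eq_zero, ← abs_nonpos_iff]
  refine le_of_forall_pos_le_add fun ε hε => ?_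
  obtain ⟨C, γ, hγ, hle⟩ :=
    abs_measureReal_word_sub_le hP hδ hPδ hμs hμc hνs hνc hconc i.pos w hε
  have hlim : Tendsto (fun m : ℕ => ε + (∏ j ∈ range (m * k), (1 + varRate P j / δ)) *
      (C * Real.exp (-(γ * m)))) atTop (nhds (0 + ε)) := by
    have := (tendsto_prod_one_add_mul_exp_neg (fun j => div_nonneg (varRate_nonneg hP j) hδ.le)
      (by simpa using hcont.div_const δ) i.pos hγ).const_mul C
    rw [zero_add]
    simpa [mul_left_comm] using tendsto_const_nhds.add this
  exact ge_of_tendsto hlim (eventually_atTop.2 ⟨1, hle⟩)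

end Uniqueness

section Projective

variable {α : Type*} [MeasurableSpace α]

theorem exists_restrict_shift_iterate_eq_comp_word (I : Finset ℤ) :
    ∃ (N n : ℕ) (g : (Fin n → α) → I → α), Measurable g ∧
      ∀ ω, I.restrict (shift^[N] ω) = g (word n ω) := by
  set N := I.sup Int.natAbs + 1
  have hI : ∀ i ∈ I, i.natAbs < N := fun i hi => Nat.lt_succ_of_le (Finset.le_sup hi)
  refine ⟨N, 2 * N, fun u i => u ⟨((i : ℤ) + N - 1).toNat, by have := hI i i.2; omega⟩,
    measurable_pi_lambda _ fun _ => measurable_pi_apply _, fun ω => funext fun i => ?_⟩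
  have := hI i i.2
  simp only [Finset.restrict, word, shift_iterate_apply]
  congr 1
  omega

theorem eq_of_map_word_eq {μ ν : Measure (ℤ → α)} [IsFiniteMeasure μ] (hμ : ShiftInvariant μ)
    (hν : ShiftInvariant ν) (h : ∀ n, μ.map (word n) = ν.map (word n)) : μ = ν := by
  refine IsProjectiveLimit.unique (P := fun I => μ.map I.restrict) (fun I => rfl) fun I => ?_
  obtain ⟨N, n, g, hg, hfac⟩ := exists_restrict_shift_iterate_eq_comp_word (α := α) I
  have hmap : ∀ ρ : Measure (ℤ → α), ShiftInvariant ρ →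
      ρ.map I.restrict = (ρ.map (word n)).map g := fun ρ hρ =>
    calc ρ.map I.restrict = (ρ.map shift^[N]).map I.restrict := by
          rw [(hρ.measurePreserving.iterate N).map_eq]
      _ = ρ.map (g ∘ word n) := by
          rw [Measure.map_map I.measurable_restrict (measurable_shift.iterate N)]
          exact congrArg (Measure.map · ρ) (funext hfac)
      _ = (ρ.map (word n)).map g := (Measure.map_map hg (measurable_word n)).symm
  show ν.map I.restrict = μ.map I.restrict
  rw [hmap ν hν, hmap μ hμ, h n]

end Projective

/-- **Theorem 4** (Gallo–Takahashi): if `P` is a regular kernel and `X` is a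
stationary chain compatible with `P` satisfying concentration of measure at
exponential rate, then `X` is the unique stationary chain compatible with `P`. -/
theorem statement4 {A : Type*} [Fintype A] [MeasurableSpace A]
    (P : A → Past A → ℝ) (hker : IsProbKernel P) (hreg : RegularKernel P)
    (μ : Measure (ℤ → A)) (hμ : StatChain P μ) (hconc : ConcExpRate μ) :
    ∀ ν : Measure (ℤ → A), StatChain P ν → ν = μ := by
  intro ν ⟨hν, hνs, hνc⟩
  obtain ⟨hμ, hμs, hμc⟩ := hμ
  obtain ⟨hcont, δ, hδ, hPδ⟩ := hreg
  have := measurableSingletonClass_of_compatible hker hδ hPδ hμc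
  refine eq_of_map_word_eq hνs hμs fun n => Measure.ext_of_singleton fun w => ?_
  rw [Measure.map_apply (measurable_word n) (measurableSet_singleton w),
    Measure.map_apply (measurable_word n) (measurableSet_singleton w)]
  exact measure_word_preimage_singleton_eq hker hδ hPδ hcont hμs hμc hνs hνc hconc n w

end GT
end

section
/- On A = {−1,+1}, for a past x different from the all-(+1) past let ℓ(x) := min{j ≥ 0 : x_{−j−1} = −1}, and given a monotonically nonincreasing sequence {p_i}_{i≥0} of values in [0,1] with limit p_∞, define the probability kernel P by P(−1|x) = p_{ℓ(x)} for x ≠ (+1,+1,…) and P(−1|+1̲) = p_∞. Then P is attractive, and for every k ≥ 1 the continuity rate satisfies var_k = p_k − p_∞; in particular var_k → 0, so P is continuous. -/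
open MeasureTheory ProbabilityTheory Filter ENNReal

namespace GT

variable {A : Type*} [Fintype A] [MeasurableSpace A]

open scoped Classical in
/-- The alphabet `{-1,+1}` is represented by `Bool`: `true ↦ +1`, `false ↦ -1`
(with the order `false < true` matching `-1 < +1`).
The kernel `P(-1|x) = p_{ℓ(x)}`, where `ℓ(x)` is the number of `+1`'s seen before the
first `-1` in the past `x`, and `P(-1| +1̲) = p_∞`. -/
noncomputable def ellP (p : ℕ → ℝ) (pinf : ℝ) : Bool → Past Bool → ℝ := fun a x =>
  let q : ℝ := if h : ∃ j, x j = false then p (Nat.find h) else pinf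
  if a then 1 - q else q

/-!
Raising coordinates of a past can only postpone its first `false`, so `P(-1|x) = p_{ℓ(x)}`
is antitone in `x` and `P` is attractive. Two pasts agreeing on their first `k` symbols
either share a `false` there, hence have the same `ℓ < k`, or both begin with `k` copies
of `true`, and then both kernel values lie in `[p_∞, p_k]`; the all-`true` past and the
past with a single `false` at `k` show that `var_k = p_k - p_∞` exactly.
-/

lemma exists_first_false_of_exists {x : Past Bool} (h : ∃ j, x j = false) :
    ∃ j, x j = false ∧ ∀ i < j, x i = true := by
  classical
  exact ⟨Nat.find h, Nat.find_spec h, fun i hi => by simpa using Nat.find_min h hi⟩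

section ellP

variable {p : ℕ → ℝ} {pinf : ℝ}

lemma ellP_true (x : Past Bool) : ellP p pinf true x = 1 - ellP p pinf false x := rfl

lemma abs_sub_ellP_eq (b : Bool) (x y : Past Bool) :
    |ellP p pinf b x - ellP p pinf b y| = |ellP p pinf false x - ellP p pinf false y| := by
  cases b
  · rfl
  · rw [ellP_true, ellP_true, ← abs_neg]
    ring_nf

lemma ellP_false_of_forall_true {x : Past Bool} (hx : ∀ j, x j = true) :
    ellP p pinf false x = pinf := by
  simp [ellP, hx]

lemma pinf_le_ellP_false (hmono : Antitone p) (hlim : Tendsto p atTop (nhds pinf))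
    (x : Past Bool) : pinf ≤ ellP p pinf false x := by
  classical
  simp only [ellP, Bool.false_eq_true, ↓reduceIte]
  split
  · exact hmono.le_of_tendsto hlim _
  · exact le_rfl

lemma p_le_ellP_false (hmono : Antitone p) {x : Past Bool} {j : ℕ} (hx : x j = false) :
    p j ≤ ellP p pinf false x := by
  classical
  have h : ∃ i, x i = false := ⟨j, hx⟩
  simp only [ellP, Bool.false_eq_true, ↓reduceIte, dif_pos h]
  exact hmono (Nat.find_le hx)

lemma ellP_false_le (hmono : Antitone p) (hlim : Tendsto p atTop (nhds pinf))
    {x : Past Bool} {k : ℕ} (hx : ∀ i < k, x i = true) : ellP p pinf false x ≤ p k := by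
  classical
  simp only [ellP, Bool.false_eq_true, ↓reduceIte]
  split
  · exact hmono ((Nat.le_find_iff _ k).mpr fun i hi => by simp [hx i hi])
  · exact hmono.le_of_tendsto hlim k

lemma ellP_false_eq_of_first_false (hmono : Antitone p) (hlim : Tendsto p atTop (nhds pinf))
    {x : Past Bool} {k : ℕ} (hk : x k = false) (hx : ∀ i < k, x i = true) :
    ellP p pinf false x = p k :=
  (ellP_false_le hmono hlim hx).antisymm (p_le_ellP_false hmono hk)

lemma ellP_false_antitone (hmono : Antitone p) (hlim : Tendsto p atTop (nhds pinf)) :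
    Antitone (ellP p pinf false) := by
  intro x y hxy
  by_cases hy : ∃ j, y j = false
  · obtain ⟨j, hyj, hy_lt⟩ := exists_first_false_of_exists hy
    have hxj : x j = false := Bool.eq_false_of_le_false (hyj ▸ hxy j)
    exact (ellP_false_le hmono hlim hy_lt).trans (p_le_ellP_false hmono hxj)
  · rw [ellP_false_of_forall_true (by simpa using hy)]
    exact pinf_le_ellP_false hmono hlim x

theorem attractive_ellP (hmono : Antitone p) (hlim : Tendsto p atTop (nhds pinf)) :
    Attractive (ellP p pinf) := by
  rintro (_ | _)
  · have hsum (x : Past Bool) :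
        ∑ b ∈ Finset.univ.filter (false ≤ ·), ellP p pinf b x = 1 := by
      simp [ellP_true]
    simpa only [hsum] using monotone_const
  · have hfilter : Finset.univ.filter (true ≤ ·) = {true} := by decide
    simp only [hfilter, Finset.sum_singleton, ellP_true]
    exact fun x y hxy => sub_le_sub_left (ellP_false_antitone hmono hlim hxy) 1

lemma abs_sub_ellP_false_le (hmono : Antitone p) (hlim : Tendsto p atTop (nhds pinf))
    {k : ℕ} {x y : Past Bool} (hxy : ∀ i < k, x i = y i) :
    |ellP p pinf false x - ellP p pinf false y| ≤ p k - pinf := by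
  by_cases hx : ∀ i < k, x i = true
  · have hy : ∀ i < k, y i = true := fun i hi => hxy i hi ▸ hx i hi
    exact abs_sub_le_of_le_of_le (pinf_le_ellP_false hmono hlim x) (ellP_false_le hmono hlim hx)
      (pinf_le_ellP_false hmono hlim y) (ellP_false_le hmono hlim hy)
  · push Not at hx
    obtain ⟨i, hik, hi⟩ := hx
    obtain ⟨j, hjx, hx_lt⟩ := exists_first_false_of_exists ⟨i, by simpa using hi⟩
    have hjk : j < k := lt_of_not_ge fun hkj => hi (hx_lt i (hik.trans_le hkj))
    have hjy : y j = false := hxy j hjk ▸ hjx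
    have hy_lt : ∀ i < j, y i = true := fun i hi => hxy i (hi.trans hjk) ▸ hx_lt i hi
    rw [ellP_false_eq_of_first_false hmono hlim hjx hx_lt,
      ellP_false_eq_of_first_false hmono hlim hjy hy_lt, sub_self, abs_zero, sub_nonneg]
    exact hmono.le_of_tendsto hlim k

theorem varRate_ellP (hmono : Antitone p) (hlim : Tendsto p atTop (nhds pinf)) (k : ℕ) :
    varRate (ellP p pinf) k = p k - pinf := by
  refine IsGreatest.csSup_eq ⟨⟨false, Function.update (fun _ => true) k false, fun _ => true,
    fun i hi => Function.update_of_ne hi.ne _ _, ?_⟩, ?_⟩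
  · rw [ellP_false_eq_of_first_false hmono hlim (Function.update_self _ _ _)
        fun i hi => Function.update_of_ne hi.ne _ _,
      ellP_false_of_forall_true fun _ => rfl,
      abs_of_nonneg (sub_nonneg.mpr (hmono.le_of_tendsto hlim k))]
  · rintro _ ⟨b, x, y, hxy, rfl⟩
    rw [abs_sub_ellP_eq]
    exact abs_sub_ellP_false_le hmono hlim hxy

end ellP

theorem statement13_general (p : ℕ → ℝ) (pinf : ℝ)
    (hmono : Antitone p)
    (hlim : Tendsto p atTop (nhds pinf)) :
    Attractive (ellP p pinf) ∧
      (∀ k : ℕ, 1 ≤ k → varRate (ellP p pinf) k = p k - pinf) ∧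
      ContinuousKernel (ellP p pinf) := by
  have hvar : varRate (ellP p pinf) = fun k => p k - pinf :=
    funext (varRate_ellP hmono hlim)
  refine ⟨attractive_ellP hmono hlim, fun k _ => congrFun hvar k, ?_⟩
  rw [ContinuousKernel, hvar, ← sub_self pinf]
  exact hlim.sub_const pinf

/-- The house-of-cards-type example of Gallo–Takahashi: for a nonincreasing sequence
`{p_i} ⊆ [0,1]` with limit `p_∞`, the kernel `P(-1|x) = p_{ℓ(x)}` is attractive and
satisfies `var_k = p_k − p_∞` for all `k ≥ 1`; in particular it is continuous. -/
theorem statement13 (p : ℕ → ℝ) (pinf : ℝ)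
    (hmono : Antitone p) (hrange : ∀ i, p i ∈ Set.Icc (0 : ℝ) 1)
    (hlim : Tendsto p atTop (nhds pinf)) :
    Attractive (ellP p pinf) ∧
      (∀ k : ℕ, 1 ≤ k → varRate (ellP p pinf) k = p k - pinf) ∧
      ContinuousKernel (ellP p pinf) :=
  statement13_general p pinf hmono hlim

end GT
end
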